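/- arXiv:1507.07391 — 3 statements merged into one kernel-verified Lean document; each statement's English description precedes it below -/
import Mathlib

section
/- Let p be a prime with p ≡ 1 (mod 5) and let k be an integer with 0 ≤ k ≤ 2(p-1)/5. Then there exist a_1, a_2, a_3, a_4 ∈ ℤ_p (depending only on k) such that for every t ∈ pℤ_p one has (2/5 + t)_k / (1 - t)_k ≡ ((2/5)_k / k!) · (1 + a_1 t + a_2 t^2 + a_3 t^3 + a_4 t^4) (mod p^5) in ℤ_p. -/
/-!
Write the two Pochhammer symbols as values at `t` of polynomials `N, D ∈ ℤ_p[X]`, namely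
`N(t) = (2/5 + t)_k` and `D(t) = (1 - t)_k`. Their constant terms `(2/5)_k` and `k!` are `p`-adic
units: no factor `2/5 + j` or `1 + j` with `j < k` is divisible by `p`, because `2 + 5j < 2p` and
`2 + 5j ≢ 0 (mod p)` when `p ≡ 1 (mod 5)`. Since `D(0)` is a unit, `N` can be divided by `D`
modulo `X⁵` in `ℤ_p[X]`, giving a quartic `Q` with `X⁵ ∣ N - D Q`; evaluating at `t ∈ pℤ_p`,
where `D(t)` is still a unit, yields `N(t)/D(t) ≡ Q(t) (mod p⁵)`. Finally `Q(0) = N(0)/D(0)` is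
a unit, so `Q = (N(0)/D(0)) · (1 + a₁X + ⋯ + a₄X⁴)`.
-/

/-- Rising factorial (Pochhammer symbol) `(a)_k = a(a+1)⋯(a+k-1)` in `ℚ_p`. -/
noncomputable def rf {p : ℕ} [Fact p.Prime] (a : ℚ_[p]) (k : ℕ) : ℚ_[p] :=
  ∏ j ∈ Finset.range k, (a + (j : ℚ_[p]))

open Polynomial IsLocalRing

namespace Polynomial

variable {R : Type*} [CommRing R]

theorem exists_degree_lt_X_pow_dvd_sub_mul (N D : R[X]) (hD : IsUnit (D.coeff 0)) (n : ℕ) :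
    ∃ Q : R[X], Q.degree < n ∧ X ^ n ∣ N - D * Q := by
  induction n with
  | zero => exact ⟨0, by simp⟩
  | succ n ih =>
    obtain ⟨Q, hdeg, E, hE⟩ := ih
    set c := E.coeff 0 * ↑hD.unit⁻¹
    obtain ⟨F, hF⟩ : X ∣ E - C c * D := X_dvd_iff.mpr <| by
      rw [coeff_sub, coeff_C_mul, mul_assoc, hD.val_inv_mul, mul_one, sub_self]
    refine ⟨Q + C c * X ^ n, ?_, F, ?_⟩
    · refine (degree_add_le _ _).trans_lt (max_lt (hdeg.trans_le ?_) ?_)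
      · exact_mod_cast n.le_succ
      · exact (degree_C_mul_X_pow_le n c).trans_lt (by exact_mod_cast n.lt_succ_self)
    · rw [pow_succ, mul_assoc, ← hF]
      linear_combination hE

theorem exists_coeff_zero_eq_one_X_pow_dvd [Nontrivial R] (N D : R[X]) (hN : IsUnit (N.eval 0))
    (hD : IsUnit (D.eval 0)) {n : ℕ} (hn : n ≠ 0) :
    ∃ A : R[X], A.coeff 0 = 1 ∧ A.natDegree < n ∧
      X ^ n ∣ C (D.eval 0) * N - C (N.eval 0) * D * A := by
  have hND : IsUnit ((C (N.eval 0) * D).coeff 0) := by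
    simpa [coeff_zero_eq_eval_zero] using hN.mul hD
  obtain ⟨A, hdeg, hdvd⟩ := exists_degree_lt_X_pow_dvd_sub_mul (C (D.eval 0) * N) _ hND n
  have hA0 : A.coeff 0 = 1 := by
    have h0 := X_pow_dvd_iff.mp hdvd 0 (Nat.pos_of_ne_zero hn)
    rw [coeff_zero_eq_eval_zero] at h0 ⊢
    simp only [eval_sub, eval_mul, eval_C] at h0
    exact (hN.mul hD).mul_left_cancel (by linear_combination -h0)
  have hA : A ≠ 0 := fun h => by simp [h] at hA0
  exact ⟨A, hA0, (natDegree_lt_iff_degree_lt hA).mpr hdeg, hdvd⟩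

theorem isUnit_eval_of_mem_maximalIdeal [IsLocalRing R] (P : R[X]) {a : R}
    (ha : a ∈ maximalIdeal R) (h0 : IsUnit (P.eval 0)) : IsUnit (P.eval a) := by
  rw [← notMem_maximalIdeal] at h0 ⊢
  intro hPa
  have hdiff : P.eval a - P.eval 0 ∈ maximalIdeal R :=
    Ideal.mem_of_dvd _ (by simpa using sub_dvd_eval_sub a 0 P) ha
  exact h0 (by simpa using Ideal.sub_mem _ hPa hdiff)

end Polynomial

theorem isUnit_ascPochhammer_eval {R : Type*} [CommSemiring R] {a : R} {k : ℕ}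
    (h : ∀ j < k, IsUnit (a + j)) : IsUnit ((ascPochhammer R k).eval a) := by
  induction k with
  | zero => simp
  | succ k ih =>
    rw [ascPochhammer_succ_eval]
    exact (ih fun j hj => h j (by omega)).mul (h k k.lt_succ_self)

theorem rf_eq_ascPochhammer_eval {p : ℕ} [Fact p.Prime] (a : ℚ_[p]) (k : ℕ) :
    rf a k = (ascPochhammer ℚ_[p] k).eval a := by
  induction k with
  | zero => simp [rf]
  | succ k ih => rw [rf, Finset.prod_range_succ, ← rf, ih, ascPochhammer_succ_eval]

theorem Nat.not_dvd_two_add_five_mul {p j : ℕ} (hp : p % 5 = 1) (hj : 5 * j + 2 < 2 * p) :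
    ¬ p ∣ 2 + 5 * j := by
  rintro ⟨m, hm⟩
  have hm2 : m < 2 := by
    by_contra! h
    have := Nat.mul_le_mul_left p h
    omega
  interval_cases m <;> omega

namespace PadicInt

variable {p : ℕ} [Fact p.Prime]

theorem rf_coe (a : ℤ_[p]) (k : ℕ) :
    rf (a : ℚ_[p]) k = (((ascPochhammer ℤ_[p] k).eval a : ℤ_[p]) : ℚ_[p]) := by
  rw [rf_eq_ascPochhammer_eval, ascPochhammer_eval₂ Coe.ringHom]
  exact eval₂_at_apply Coe.ringHom a

theorem isUnit_natCast_of_not_dvd {n : ℕ} (h : ¬ p ∣ n) : IsUnit (n : ℤ_[p]) :=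
  isUnit_iff.mpr (norm_natCast_eq_one_iff.mpr ((Nat.Prime.coprime_iff_not_dvd Fact.out).mpr h))

theorem exists_natCast_mul_eq {m n : ℕ} (hn : ¬ p ∣ n) :
    ∃ w : ℤ_[p], n * w = m ∧ (w : ℚ_[p]) = m / n := by
  obtain ⟨u, hu⟩ := isUnit_natCast_of_not_dvd hn
  have hw : (n : ℤ_[p]) * (m * ↑u⁻¹) = m := by rw [← hu, mul_left_comm, u.mul_inv, mul_one]
  refine ⟨m * ↑u⁻¹, hw, ?_⟩
  have hn0 : (n : ℚ_[p]) ≠ 0 := Nat.cast_ne_zero.mpr (by rintro rfl; exact hn (dvd_zero p))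
  rw [eq_div_iff hn0, mul_comm]
  exact_mod_cast congrArg ((↑) : ℤ_[p] → ℚ_[p]) hw

theorem isUnit_ascPochhammer_eval_two_fifths (hp : p % 5 = 1) {w : ℤ_[p]} (hw : 5 * w = 2)
    {k : ℕ} (hk : 5 * k ≤ 2 * (p - 1)) : IsUnit ((ascPochhammer ℤ_[p] k).eval w) := by
  refine isUnit_ascPochhammer_eval fun j hj => isUnit_of_mul_isUnit_right (x := (5 : ℤ_[p])) ?_
  have h := isUnit_natCast_of_not_dvd (p := p) (Nat.not_dvd_two_add_five_mul (j := j) hp (by omega))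
  convert h using 1
  push_cast
  linear_combination hw

theorem coe_div_sub_coe_div_mul_eq (n d n₀ d₀ a : ℤ_[p]) (h : IsUnit (d₀ * d)) :
    ∃ v : ℤ_[p],
      (n : ℚ_[p]) / d - n₀ / d₀ * a = ((d₀ * n - n₀ * d * a : ℤ_[p]) : ℚ_[p]) * v := by
  obtain ⟨u, hu⟩ := h
  have hv : ((d₀ : ℚ_[p]) * d) * (↑u⁻¹ : ℤ_[p]) = 1 := by
    exact_mod_cast congrArg ((↑) : ℤ_[p] → ℚ_[p]) (hu ▸ u.mul_inv)
  have hd₀ : (d₀ : ℚ_[p]) ≠ 0 := left_ne_zero_of_mul (left_ne_zero_of_mul_eq_one hv)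
  have hd : (d : ℚ_[p]) ≠ 0 := right_ne_zero_of_mul (left_ne_zero_of_mul_eq_one hv)
  refine ⟨↑u⁻¹, ?_⟩
  push_cast
  field_simp
  linear_combination -((d₀ : ℚ_[p]) * n - n₀ * d * a) * hv

theorem exists_eval_div_eval_sub_mul_eq (N D : ℤ_[p][X]) (hN : IsUnit (N.eval 0))
    (hD : IsUnit (D.eval 0)) {n : ℕ} (hn : n ≠ 0) :
    ∃ A : ℤ_[p][X], A.coeff 0 = 1 ∧ A.natDegree < n ∧ ∀ s : ℤ_[p], ∃ z : ℤ_[p],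
      ((N.eval (p * s) : ℤ_[p]) : ℚ_[p]) / (D.eval (p * s) : ℤ_[p])
        - ((N.eval 0 : ℤ_[p]) : ℚ_[p]) / (D.eval 0 : ℤ_[p]) * (A.eval (p * s) : ℤ_[p])
        = (p : ℚ_[p]) ^ n * z := by
  obtain ⟨A, hA0, hAdeg, hdvd⟩ := exists_coeff_zero_eq_one_X_pow_dvd N D hN hD hn
  refine ⟨A, hA0, hAdeg, fun s => ?_⟩
  obtain ⟨E, hE⟩ := eval_dvd (x := (p : ℤ_[p]) * s) hdvd
  have hps : (p : ℤ_[p]) * s ∈ maximalIdeal ℤ_[p] := by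
    rw [maximalIdeal_eq_span_p]
    exact Ideal.mul_mem_right _ _ (Ideal.subset_span rfl)
  obtain ⟨v, hv⟩ := coe_div_sub_coe_div_mul_eq (N.eval _) (D.eval _) (N.eval 0) (D.eval 0)
    (A.eval _) (hD.mul (isUnit_eval_of_mem_maximalIdeal D hps hD))
  refine ⟨s ^ n * E * v, ?_⟩
  simp only [eval_sub, eval_mul, eval_C, eval_pow, eval_X] at hE
  rw [hv, hE]
  push_cast
  ring

end PadicInt

/-- For a prime `p ≡ 1 (mod 5)` and `0 ≤ k ≤ 2(p-1)/5`, there exist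
`a₁, a₂, a₃, a₄ ∈ ℤ_p` (depending only on `k`) such that for every `t ∈ pℤ_p`,
`(2/5 + t)_k / (1 - t)_k ≡ ((2/5)_k / k!) · (1 + a₁ t + a₂ t² + a₃ t³ + a₄ t⁴) (mod p^5)`
in `ℤ_p`. -/
theorem stmt3 (p : ℕ) [Fact p.Prime] (hp : p % 5 = 1) (k : ℕ) (hk : k ≤ 2 * (p - 1) / 5) :
    ∃ a₁ a₂ a₃ a₄ : ℤ_[p], ∀ t : ℚ_[p], (∃ s : ℤ_[p], t = (p : ℚ_[p]) * s) →
      ∃ z : ℤ_[p],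
        rf ((2 : ℚ_[p]) / 5 + t) k / rf (1 - t) k
          - (rf ((2 : ℚ_[p]) / 5) k / (k.factorial : ℚ_[p])) *
              (1 + (a₁ : ℚ_[p]) * t + (a₂ : ℚ_[p]) * t ^ 2 + (a₃ : ℚ_[p]) * t ^ 3
                + (a₄ : ℚ_[p]) * t ^ 4)
        = (p : ℚ_[p]) ^ 5 * (z : ℚ_[p]) := by
  have hp2 : 2 ≤ p := (Fact.out : p.Prime).two_le
  have h5k : 5 * k ≤ 2 * (p - 1) := by have := Nat.div_mul_le_self (2 * (p - 1)) 5; omega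
  obtain ⟨w, h5w, hw⟩ := PadicInt.exists_natCast_mul_eq (p := p) (m := 2) (n := 5) fun h => by
    have := Nat.le_of_dvd (by norm_num) h; omega
  set P := ascPochhammer ℤ_[p] k
  have hN (x : ℤ_[p]) : (P.comp (X + C w)).eval x = P.eval (w + x) := by simp [add_comm]
  have hD (x : ℤ_[p]) : (P.comp (1 - X)).eval x = P.eval (1 - x) := by simp
  have hN0 : IsUnit ((P.comp (X + C w)).eval 0) := by
    rw [hN, add_zero]
    exact PadicInt.isUnit_ascPochhammer_eval_two_fifths hp (by exact_mod_cast h5w) h5k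
  have hD0 : (P.comp (1 - X)).eval 0 = k.factorial := by rw [hD, sub_zero, ascPochhammer_eval_one]
  have hD0u : IsUnit ((P.comp (1 - X)).eval 0) := hD0 ▸ PadicInt.isUnit_natCast_of_not_dvd
    fun h => by have := (Nat.Prime.dvd_factorial Fact.out).mp h; omega
  obtain ⟨A, hA0, hAdeg, hA⟩ :=
    PadicInt.exists_eval_div_eval_sub_mul_eq _ _ hN0 hD0u (n := 5) (by norm_num)
  refine ⟨A.coeff 1, A.coeff 2, A.coeff 3, A.coeff 4, ?_⟩
  rintro t ⟨s, rfl⟩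
  obtain ⟨z, hz⟩ := hA s
  refine ⟨z, ?_⟩
  rw [hN, hN, hD, hD0, add_zero, ← PadicInt.rf_coe, ← PadicInt.rf_coe, ← PadicInt.rf_coe,
    eval_eq_sum_range' hAdeg] at hz
  simpa [Finset.sum_range_succ, hA0, hw, add_comm] using hz
end

section
/- Let n be an even integer with n ≥ 2 and n ≠ 4, and let p ≥ 7 be a prime with p ≡ 1 (mod n) but p ≢ 1 (mod 2n). Then ∑_{k=0}^{(p-1)/n} (1/n)_k^4 · ((2n-3)/(2n))_k / ( (5/(2n))_k · (k!)^4 ) ≡ 0 (mod p) in ℤ_p. -/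
/-!
Put `m = (p - 1) / n`; it is odd because `p ≢ 1 (mod 2n)`. Modulo `p` we have `1/n ≡ -m`, so the
parameters `a = 1/n`, `d = 1` (from `k!`) and `b = (2n-3)/(2n)`, `c = 5/(2n)` satisfy
`a + d + m = 1 = b + c + m`. The reflection `(x)_m = (-1)^k (x)_{m-k} (1-x-m)_k` therefore turns
the `(m-k)`-th summand into minus the `k`-th one, and the sum vanishes modulo `p`.

It remains to see that the denominators are `p`-adic units. Since `(c)_m = ±(b)_m`, this comes
down to `b + j ≢ 0` for `j < m`: otherwise `2n(j+1) = p + 3`, so `n ∣ 4`, and `n = 2` would give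
`p ≡ 1 (mod 4)`. The sum then lies in `ℤ_p` and reduces to the vanishing sum over `ZMod p`.
-/

open Polynomial Finset

section CommSemiring
variable {S : Type*} [CommSemiring S]

theorem ascPochhammer_eval_eq_prod_range (n : ℕ) (s : S) :
    (ascPochhammer S n).eval s = ∏ j ∈ range n, (s + j) := by
  induction n with
  | zero => simp
  | succ n ih => simp [ascPochhammer_succ_right, ih, prod_range_succ]

theorem ascPochhammer_eval_mul_eval_add (x : S) (k l : ℕ) :
    (ascPochhammer S k).eval x * (ascPochhammer S l).eval (x + k) =
      (ascPochhammer S (k + l)).eval x := by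
  rw [← ascPochhammer_mul, eval_mul, eval_comp, eval_add, eval_X, eval_natCast]

theorem ascPochhammer_eval_ne_zero_of_le {x : S} {k m : ℕ} (hk : k ≤ m)
    (h : (ascPochhammer S m).eval x ≠ 0) : (ascPochhammer S k).eval x ≠ 0 := by
  rw [← Nat.add_sub_cancel' hk, ← ascPochhammer_eval_mul_eval_add] at h
  exact left_ne_zero_of_mul h

end CommSemiring

section CommRing
variable {R : Type*} [CommRing R]

theorem ascPochhammer_eval_reflect (x : R) {k m : ℕ} (hk : k ≤ m) :
    (ascPochhammer R m).eval x =
      (-1) ^ k * (ascPochhammer R (m - k)).eval x * (ascPochhammer R k).eval (1 - x - m) := by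
  rw [← Nat.sub_add_cancel hk, ← ascPochhammer_eval_mul_eval_add, Nat.sub_add_cancel hk,
    ← neg_neg (x + _), ascPochhammer_eval_neg_eq_descPochhammer,
    descPochhammer_eval_eq_ascPochhammer, Nat.cast_sub hk]
  ring_nf

theorem ascPochhammer_eval_reflect_self (x : R) (m : ℕ) :
    (ascPochhammer R m).eval x = (-1) ^ m * (ascPochhammer R m).eval (1 - x - m) := by
  simpa using ascPochhammer_eval_reflect x le_rfl (m := m)

end CommRing

section Field
variable {F : Type*} [Field F]

theorem ascPochhammer_eval_sub_eq_div (x : F) {k m : ℕ} (hk : k ≤ m)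
    (h : (ascPochhammer F k).eval (1 - x - m) ≠ 0) :
    (ascPochhammer F (m - k)).eval x =
      (-1) ^ k * (ascPochhammer F m).eval x / (ascPochhammer F k).eval (1 - x - m) := by
  have hs : (-1 : F) ^ k * (-1) ^ k = 1 := by rw [← mul_pow]; norm_num
  rw [eq_div_iff h, ascPochhammer_eval_reflect x hk]
  linear_combination
    (-(ascPochhammer F (m - k)).eval x * (ascPochhammer F k).eval (1 - x - m)) * hs

theorem sum_range_succ_eq_zero_of_reflect_eq_neg (h2 : (2 : F) ≠ 0) {m : ℕ} {t : ℕ → F}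
    (ht : ∀ k ≤ m, t (m - k) = -t k) : ∑ k ∈ range (m + 1), t k = 0 := by
  have hsum : ∑ k ∈ range (m + 1), t k = -∑ k ∈ range (m + 1), t k := by
    conv_lhs => rw [← sum_range_reflect]
    rw [← sum_neg_distrib]
    refine sum_congr rfl fun k hk => ?_
    rw [Nat.add_sub_cancel]
    exact ht k (Nat.lt_succ_iff.1 (mem_range.1 hk))
  exact (mul_eq_zero.1 (by linear_combination hsum : (2 : F) * _ = 0)).resolve_left h2

theorem ascPochhammer_ratio_reflect {m r : ℕ} (hm : Odd m) (hr : Even r) {a b c d : F}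
    (had : a + d + m = 1) (hbc : b + c + m = 1)
    (hb : (ascPochhammer F m).eval b ≠ 0) (hd : (ascPochhammer F m).eval d ≠ 0)
    {k : ℕ} (hk : k ≤ m) :
    (ascPochhammer F (m - k)).eval a ^ r * (ascPochhammer F (m - k)).eval b /
        ((ascPochhammer F (m - k)).eval c * (ascPochhammer F (m - k)).eval d ^ r) =
      -((ascPochhammer F k).eval a ^ r * (ascPochhammer F k).eval b /
        ((ascPochhammer F k).eval c * (ascPochhammer F k).eval d ^ r)) := by
  have ha' : 1 - a - m = d := by linear_combination -had
  have hd' : 1 - d - m = a := by linear_combination -had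
  have hb' : 1 - b - m = c := by linear_combination -hbc
  have hc' : 1 - c - m = b := by linear_combination -hbc
  have hat : (ascPochhammer F m).eval a = -(ascPochhammer F m).eval d := by
    rw [ascPochhammer_eval_reflect_self, ha', hm.neg_one_pow, neg_one_mul]
  have hct : (ascPochhammer F m).eval c = -(ascPochhammer F m).eval b := by
    rw [ascPochhammer_eval_reflect_self, hc', hm.neg_one_pow, neg_one_mul]
  have ha : (ascPochhammer F m).eval a ≠ 0 := by rw [hat]; exact neg_ne_zero.2 hd
  have hc : (ascPochhammer F m).eval c ≠ 0 := by rw [hct]; exact neg_ne_zero.2 hb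
  have hak := ascPochhammer_eval_ne_zero_of_le hk ha
  have hbk := ascPochhammer_eval_ne_zero_of_le hk hb
  have hck := ascPochhammer_eval_ne_zero_of_le hk hc
  have hdk := ascPochhammer_eval_ne_zero_of_le hk hd
  have hs : ((-1 : F) ^ k) ^ r = 1 := by
    rw [← pow_mul, mul_comm, pow_mul, hr.neg_one_pow, one_pow]
  rw [ascPochhammer_eval_sub_eq_div a hk (ha' ▸ hdk),
    ascPochhammer_eval_sub_eq_div b hk (hb' ▸ hck),
    ascPochhammer_eval_sub_eq_div c hk (hc' ▸ hbk),
    ascPochhammer_eval_sub_eq_div d hk (hd' ▸ hak), ha', hb', hc', hd', hat, hct]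
  simp only [div_pow, mul_pow, hr.neg_pow, hs]
  field_simp

theorem sum_ascPochhammer_ratio_eq_zero (h2 : (2 : F) ≠ 0) {m r : ℕ} (hm : Odd m)
    (hr : Even r) {a b c d : F} (had : a + d + m = 1) (hbc : b + c + m = 1)
    (hb : (ascPochhammer F m).eval b ≠ 0) (hd : (ascPochhammer F m).eval d ≠ 0) :
    ∑ k ∈ range (m + 1), (ascPochhammer F k).eval a ^ r * (ascPochhammer F k).eval b /
      ((ascPochhammer F k).eval c * (ascPochhammer F k).eval d ^ r) = 0 :=
  sum_range_succ_eq_zero_of_reflect_eq_neg h2 fun _ hk =>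
    ascPochhammer_ratio_reflect hm hr had hbc hb hd hk

end Field

namespace PadicInt
variable {p : ℕ} [Fact p.Prime]

/-- Stated as membership in a subring of `ℚ_[p] × ZMod p`, so that closure under the ring
operations comes for free. -/
def HasResidue (q : ℚ_[p]) (r : ZMod p) : Prop :=
  (q, r) ∈ (Coe.ringHom.prod toZMod).range

namespace HasResidue
variable {q q₁ q₂ : ℚ_[p]} {r r₁ r₂ : ZMod p}

theorem natCast (k : ℕ) : HasResidue (k : ℚ_[p]) (k : ZMod p) := natCast_mem _ k

theorem ofNat (k : ℕ) [k.AtLeastTwo] : HasResidue (OfNat.ofNat k : ℚ_[p]) (OfNat.ofNat k) :=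
  ofNat_mem _ k

theorem one : HasResidue (1 : ℚ_[p]) 1 := one_mem _

theorem add (h₁ : HasResidue q₁ r₁) (h₂ : HasResidue q₂ r₂) :
    HasResidue (q₁ + q₂) (r₁ + r₂) :=
  add_mem h₁ h₂

theorem sub (h₁ : HasResidue q₁ r₁) (h₂ : HasResidue q₂ r₂) :
    HasResidue (q₁ - q₂) (r₁ - r₂) :=
  sub_mem h₁ h₂

theorem mul (h₁ : HasResidue q₁ r₁) (h₂ : HasResidue q₂ r₂) :
    HasResidue (q₁ * q₂) (r₁ * r₂) :=
  mul_mem h₁ h₂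

theorem pow (h : HasResidue q r) (k : ℕ) : HasResidue (q ^ k) (r ^ k) := pow_mem h k

theorem inv (h : HasResidue q r) (hr : r ≠ 0) : HasResidue q⁻¹ r⁻¹ := by
  obtain ⟨x, hx⟩ := h
  simp only [RingHom.prod_apply, Prod.mk.injEq] at hx
  obtain ⟨rfl, rfl⟩ := hx
  have hu : IsUnit x := IsLocalRing.notMem_maximalIdeal.1 fun hx => hr <| by
    rwa [← ker_toZMod, RingHom.mem_ker] at hx
  obtain ⟨u, rfl⟩ := hu
  exact ⟨↑u⁻¹, by simp [map_units_inv]⟩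

theorem div (h₁ : HasResidue q₁ r₁) (h₂ : HasResidue q₂ r₂) (hr : r₂ ≠ 0) :
    HasResidue (q₁ / q₂) (r₁ / r₂) := by
  simpa only [div_eq_mul_inv] using h₁.mul (h₂.inv hr)

theorem prod {ι : Type*} (s : Finset ι) {q : ι → ℚ_[p]} {r : ι → ZMod p}
    (h : ∀ i ∈ s, HasResidue (q i) (r i)) :
    HasResidue (∏ i ∈ s, q i) (∏ i ∈ s, r i) := by
  rw [HasResidue, prod_mk_prod]
  exact prod_mem h

theorem sum {ι : Type*} (s : Finset ι) {q : ι → ℚ_[p]} {r : ι → ZMod p}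
    (h : ∀ i ∈ s, HasResidue (q i) (r i)) :
    HasResidue (∑ i ∈ s, q i) (∑ i ∈ s, r i) := by
  rw [HasResidue, prod_mk_sum]
  exact sum_mem h

theorem rf (h : HasResidue q r) (k : ℕ) :
    HasResidue (_root_.rf q k) ((ascPochhammer (ZMod p) k).eval r) := by
  rw [ascPochhammer_eval_eq_prod_range]
  exact prod _ fun j _ => h.add (natCast j)

theorem exists_eq_p_mul (h : HasResidue q 0) : ∃ c : ℤ_[p], q = p * c := by
  obtain ⟨x, hx⟩ := h
  simp only [RingHom.prod_apply, Prod.mk.injEq] at hx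
  obtain ⟨rfl, hx⟩ := hx
  obtain ⟨c, rfl⟩ : (p : ℤ_[p]) ∣ x := by
    rwa [← Ideal.mem_span_singleton, ← maximalIdeal_eq_span_p, ← ker_toZMod]
  exact ⟨c, rfl⟩

theorem summand {n : ℕ} (h2 : (2 : ZMod p) ≠ 0) (hn : (n : ZMod p) ≠ 0) {k : ℕ}
    (hk : (ascPochhammer (ZMod p) k).eval (5 / (2 * n) : ZMod p) *
      (k.factorial : ZMod p) ^ 4 ≠ 0) :
    HasResidue
      (_root_.rf (1 / (n : ℚ_[p])) k ^ 4 *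
          _root_.rf ((2 * (n : ℚ_[p]) - 3) / (2 * (n : ℚ_[p]))) k /
        (_root_.rf (5 / (2 * (n : ℚ_[p]))) k * (k.factorial : ℚ_[p]) ^ 4))
      ((ascPochhammer (ZMod p) k).eval (1 / n : ZMod p) ^ 4 *
          (ascPochhammer (ZMod p) k).eval ((2 * n - 3) / (2 * n) : ZMod p) /
        ((ascPochhammer (ZMod p) k).eval (5 / (2 * n) : ZMod p) * (k.factorial : ZMod p) ^ 4)) := by
  have h2n := mul_ne_zero h2 hn
  have hn' := natCast (p := p) n
  have h2n' := (ofNat 2).mul hn'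
  exact ((((one.div hn' hn).rf k).pow 4).mul
    ((((ofNat 2).mul hn').sub (ofNat 3)).div h2n' h2n |>.rf k)).div
    ((((ofNat 5).div h2n' h2n).rf k).mul ((natCast _).pow 4)) hk

end HasResidue
end PadicInt

theorem Nat.eq_mul_sub_one_div_add_one {p n : ℕ} (h : p % n = 1) :
    p = n * ((p - 1) / n) + 1 := by
  have hdiv : n * ((p - 1) / n) = p - 1 := Nat.mul_div_cancel' (h ▸ Nat.dvd_sub_mod p)
  have := Nat.mod_le p n
  omega

theorem Nat.odd_of_mod_two_mul_ne_one {p n m : ℕ} (hp : p = n * m + 1)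
    (h : ¬ p % (2 * n) = 1) : Odd m := by
  refine Nat.not_even_iff_odd.1 fun ⟨t, ht⟩ => h ?_
  rw [hp, ht, ← two_mul, ← mul_assoc, mul_comm n 2, Nat.mul_add_mod]
  exact Nat.one_mod_eq_one.2 (by omega)

theorem Nat.not_two_mul_mul_succ_modEq_three {p n m j : ℕ} (hp : p = n * m + 1)
    (hpn2 : ¬ p % (2 * n) = 1) (hn2 : 2 ≤ n) (hn4 : n ≠ 4) (hj : j < m) :
    ¬ 2 * n * (j + 1) ≡ 3 [MOD p] := by
  intro h
  rw [mul_assoc] at h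
  have hle : n * (j + 1) ≤ n * m := Nat.mul_le_mul_left n hj
  have hge : n * 1 ≤ n * (j + 1) := Nat.mul_le_mul_left n (by omega)
  obtain ⟨t, ht⟩ := (Nat.modEq_iff_dvd' (by omega)).1 h.symm
  obtain rfl | rfl | t := t
  · omega
  · -- `2n(j+1) = p + 3 = nm + 4`, so `n ∣ 4`
    have h4 : n ∣ 4 := ⟨2 * (j + 1) - m, by rw [Nat.mul_sub, mul_left_comm]; omega⟩
    obtain rfl : n = 2 := by
      have := Nat.le_of_dvd (by norm_num) h4
      interval_cases n <;> simp_all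
    exact hpn2 (by omega)
  · have : p * (t + 1 + 1) = p * t + 2 * p := by ring
    omega

theorem ZMod.natCast_mul_natCast_eq_neg_one {p n m : ℕ} (hp : p = n * m + 1) :
    (n : ZMod p) * m = -1 := by
  have : ((n * m + 1 : ℕ) : ZMod p) = 0 := hp ▸ ZMod.natCast_self p
  push_cast at this
  linear_combination this

section ZMod
variable {p n m : ℕ} [Fact p.Prime]

theorem ZMod.two_ne_zero_of_three_le (hp : 3 ≤ p) : (2 : ZMod p) ≠ 0 :=
  Ring.two_ne_zero (by rw [ZMod.ringChar_zmod_n]; omega)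

theorem ZMod.ascPochhammer_eval_two_mul_sub_three_div_ne_zero (hp : p = n * m + 1)
    (hpn2 : ¬ p % (2 * n) = 1) (hn2 : 2 ≤ n) (hn4 : n ≠ 4) (h2 : (2 : ZMod p) ≠ 0)
    (hn : (n : ZMod p) ≠ 0) :
    (ascPochhammer (ZMod p) m).eval ((2 * n - 3) / (2 * n) : ZMod p) ≠ 0 := by
  rw [Ne, ascPochhammer_eval_eq_zero_iff]
  rintro ⟨j, hj, hβ⟩
  refine Nat.not_two_mul_mul_succ_modEq_three hp hpn2 hn2 hn4 hj
    ((ZMod.natCast_eq_natCast_iff _ _ _).1 ?_)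
  push_cast
  rw [hβ]
  field_simp
  ring

theorem ZMod.ascPochhammer_eval_one_ne_zero (hm : m < p) :
    (ascPochhammer (ZMod p) m).eval 1 ≠ 0 := by
  rw [ascPochhammer_eval_one]
  exact (ZMod.natCast_eq_zero_iff _ p).not.2 fun h => by
    have := (Nat.Prime.dvd_factorial Fact.out).1 h
    omega

end ZMod

theorem stmt9_general (n p : ℕ) [Fact p.Prime] (hn2 : 2 ≤ n) (hn4 : n ≠ 4)
    (hpn : p % n = 1) (hpn2 : ¬ p % (2 * n) = 1) :
    ∃ c : ℤ_[p],
      (∑ k ∈ Finset.range ((p - 1) / n + 1),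
        rf (1 / (n : ℚ_[p])) k ^ 4 *
          rf ((2 * (n : ℚ_[p]) - 3) / (2 * (n : ℚ_[p]))) k /
          (rf (5 / (2 * (n : ℚ_[p]))) k * (k.factorial : ℚ_[p]) ^ 4))
      = (p : ℚ_[p]) * (c : ℚ_[p]) := by
  set m := (p - 1) / n
  have hp : p = n * m + 1 := Nat.eq_mul_sub_one_div_add_one hpn
  have hm : Odd m := Nat.odd_of_mod_two_mul_ne_one hp hpn2
  have hnm := ZMod.natCast_mul_natCast_eq_neg_one hp
  have hn : (n : ZMod p) ≠ 0 := left_ne_zero_of_mul (hnm ▸ neg_ne_zero.2 one_ne_zero)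
  have h2 := ZMod.two_ne_zero_of_three_le (p := p) (by nlinarith [hm.pos])
  have hb := ZMod.ascPochhammer_eval_two_mul_sub_three_div_ne_zero hp hpn2 hn2 hn4 h2 hn
  have hd := ZMod.ascPochhammer_eval_one_ne_zero (p := p) (m := m) (by nlinarith)
  have hc : (ascPochhammer (ZMod p) m).eval (5 / (2 * n) : ZMod p) ≠ 0 := by
    rw [ascPochhammer_eval_reflect_self, show (1 - 5 / (2 * n) - m : ZMod p) =
      (2 * n - 3) / (2 * n) by field_simp; linear_combination -2 * hnm]
    exact mul_ne_zero (pow_ne_zero _ (neg_ne_zero.2 one_ne_zero)) hb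
  apply PadicInt.HasResidue.exists_eq_p_mul
  rw [← sum_ascPochhammer_ratio_eq_zero h2 hm (by decide : Even 4) (a := 1 / n) (d := 1)
    (b := (2 * n - 3) / (2 * n)) (c := 5 / (2 * n)) (by field_simp; linear_combination hnm)
    (by field_simp; linear_combination 2 * hnm) hb hd]
  refine PadicInt.HasResidue.sum _ fun k hk => ?_
  have hk : k ≤ m := Nat.lt_succ_iff.1 (mem_range.1 hk)
  rw [ascPochhammer_eval_one]
  refine PadicInt.HasResidue.summand h2 hn
    (mul_ne_zero (ascPochhammer_eval_ne_zero_of_le hk hc) ?_)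
  simpa using pow_ne_zero 4 (ascPochhammer_eval_ne_zero_of_le hk hd)

/-- Let `n` be even with `n ≥ 2`, `n ≠ 4`, and `p ≥ 7` prime with `p ≡ 1 (mod n)`
but `p ≢ 1 (mod 2n)`. Then
`∑_{k=0}^{(p-1)/n} (1/n)_k⁴ ((2n-3)/(2n))_k / ((5/(2n))_k (k!)⁴) ≡ 0 (mod p)`
in `ℤ_p`, i.e. the sum lies in `pℤ_p`. -/
theorem stmt9 (n p : ℕ) [Fact p.Prime] (hn2 : 2 ≤ n) (hneven : Even n) (hn4 : n ≠ 4)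
    (hp : 7 ≤ p) (hpn : p % n = 1) (hpn2 : ¬ p % (2 * n) = 1) :
    ∃ c : ℤ_[p],
      (∑ k ∈ Finset.range ((p - 1) / n + 1),
        rf (1 / (n : ℚ_[p])) k ^ 4 *
          rf ((2 * (n : ℚ_[p]) - 3) / (2 * (n : ℚ_[p]))) k /
          (rf (5 / (2 * (n : ℚ_[p]))) k * (k.factorial : ℚ_[p]) ^ 4))
      = (p : ℚ_[p]) * (c : ℚ_[p]) :=
  stmt9_general n p hn2 hn4 hpn hpn2
end

section
/- Let p be a prime with p ≡ 1 (mod 8). Then for all x, y, z, w ∈ pℤ_p: ∑_{k=0}^{(p-1)/4} (16k+1) · [ (1/8)_k · (1/4 - x)_k · (1/4 - y)_k · (1/4 - z)_k · (1/4 - w)_k · ((1-p)/4)_k ] / [ (7/8 + x)_k · (7/8 + y)_k · (7/8 + z)_k · (7/8 + w)_k · (7/8 + p/4)_k · k! ] ∈ pℤ_p. -/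
/-!
Write `p = 8m + 1`. For `x, y, z, w ∈ pℤ_p` and `k ≤ 2m` every factor of the denominator is a
`p`-adic unit, so each summand lies in `ℤ_p` and reduces mod `p` to the summand with
`x = y = z = w = p = 0`. In `𝔽_p` we have `1/8 = -m`, `1/4 = -2m` and `7/8 = m + 1`, so `(1/8)_k`
vanishes for `k > m`, while for `k ≤ m` the reduced summand is
`(16k + 1) m!⁶ (2m)!⁵ / (k! (m-k)! ((2m-k)! (m+k)!)⁵)`. The factorial part is invariant under
`k ↦ m - k` and `(16k + 1) + (16(m - k) + 1) = 2p`, so the reduced sum is `0`.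
-/

open Finset Nat

section Field

variable {F : Type*} [Field F] {m : ℕ}

/-- The summand of the theorem at `x = y = z = w = 0`, with `p` replaced by `0`: its residue mod `p`
when `F = ZMod p`. -/
noncomputable def baseTerm (F : Type*) [Field F] (k : ℕ) : F :=
  (16 * k + 1) * ((ascPochhammer F k).eval (1 / 8) * (ascPochhammer F k).eval (1 / 4) ^ 5) /
    ((ascPochhammer F k).eval (7 / 8) ^ 5 * k !)

theorem eight_ne_zero_of_eight_mul_add_one_eq_zero (h : (8 * m + 1 : F) = 0) : (8 : F) ≠ 0 := by
  intro h8
  simp [h8] at h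

theorem one_div_eight_eq (h : (8 * m + 1 : F) = 0) : (1 / 8 : F) = -(m : F) := by
  rw [div_eq_iff (eight_ne_zero_of_eight_mul_add_one_eq_zero h)]
  linear_combination h

theorem one_div_four_eq (h : (8 * m + 1 : F) = 0) : (1 / 4 : F) = -((2 * m : ℕ) : F) := by
  have h4 : (4 : F) ≠ 0 := fun h4 => by simp [show (8 : F) = 2 * 4 by norm_num, h4] at h
  rw [div_eq_iff h4]
  push_cast
  linear_combination h

theorem seven_div_eight_eq (h : (8 * m + 1 : F) = 0) : (7 / 8 : F) = ((m + 1 : ℕ) : F) := by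
  rw [div_eq_iff (eight_ne_zero_of_eight_mul_add_one_eq_zero h)]
  push_cast
  linear_combination -h

theorem ascPochhammer_eval_neg_natCast {R : Type*} [CommRing R] (n k : ℕ) :
    (ascPochhammer R k).eval (-(n : R)) = (-1) ^ k * n.descFactorial k := by
  rw [ascPochhammer_eval_neg_eq_descPochhammer, descPochhammer_eval_eq_descFactorial]

theorem natCast_factorial_ne_zero_of_le {n k : ℕ} (hn : (n ! : F) ≠ 0) (hk : k ≤ n) :
    (k ! : F) ≠ 0 := by
  obtain ⟨c, hc⟩ := Nat.factorial_dvd_factorial hk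
  rw [hc, Nat.cast_mul] at hn
  exact left_ne_zero_of_mul hn

theorem baseTerm_eq_zero (h : (8 * m + 1 : F) = 0) {k : ℕ} (hk : m < k) : baseTerm F k = 0 := by
  rw [baseTerm, one_div_eight_eq h, ascPochhammer_eval_neg_coe_nat_of_lt hk]
  simp

theorem baseTerm_eq (h : (8 * m + 1 : F) = 0) (hfac : ((2 * m) ! : F) ≠ 0) {k : ℕ}
    (hk : k ≤ m) :
    baseTerm F k = (16 * k + 1) * ((m ! : F) ^ 6 * ((2 * m) ! : F) ^ 5 /
      (k ! * (m - k) ! * (((2 * m - k) ! : F) * (m + k) !) ^ 5)) := by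
  have hfac' {n : ℕ} (hn : n ≤ 2 * m) : (n ! : F) ≠ 0 :=
    natCast_factorial_ne_zero_of_le hfac hn
  have hdesc₁ : (m.descFactorial k : F) = m ! / (m - k) ! := by
    rw [eq_div_iff (hfac' (by omega)), mul_comm, ← Nat.cast_mul,
      Nat.factorial_mul_descFactorial hk]
  have hdesc₂ : ((2 * m).descFactorial k : F) = (2 * m) ! / (2 * m - k) ! := by
    rw [eq_div_iff (hfac' (by omega)), mul_comm, ← Nat.cast_mul,
      Nat.factorial_mul_descFactorial (by omega)]
  have hasc : ((m + 1).ascFactorial k : F) = (m + k) ! / m ! := by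
    rw [eq_div_iff (hfac' (by omega)), mul_comm, ← Nat.cast_mul, Nat.factorial_mul_ascFactorial]
  have hsign : ((-1 : F) ^ k) ^ 6 = 1 := by
    rw [← pow_mul]
    exact Even.neg_one_pow ⟨3 * k, by ring⟩
  rw [baseTerm, one_div_eight_eq h, one_div_four_eq h, seven_div_eight_eq h,
    ascPochhammer_eval_neg_natCast, ascPochhammer_eval_neg_natCast,
    ascPochhammer_nat_eq_natCast_ascFactorial, hdesc₁, hdesc₂, hasc]
  have := hfac' (n := k) (by omega)
  have := hfac' (n := m - k) (by omega)
  have := hfac' (n := 2 * m - k) (by omega)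
  have := hfac' (n := m + k) (by omega)
  have := hfac' (n := m) (by omega)
  field_simp
  linear_combination (16 * (k : F) + 1) * hsign

theorem ascPochhammer_eval_seven_div_eight_ne_zero (h : (8 * m + 1 : F) = 0) {k : ℕ}
    (hk : ((m + k) ! : F) ≠ 0) : (ascPochhammer F k).eval (7 / 8) ≠ 0 := by
  rw [seven_div_eight_eq h, ascPochhammer_nat_eq_natCast_ascFactorial]
  rw [← Nat.factorial_mul_ascFactorial, Nat.cast_mul] at hk
  exact right_ne_zero_of_mul hk

theorem two_mul_sum_range_mul_of_symm {R : Type*} [CommRing R] {g : ℕ → R}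
    (hg : ∀ k ≤ m, g (m - k) = g k) (a b : R) :
    2 * ∑ k ∈ range (m + 1), (a * k + b) * g k =
      (a * m + 2 * b) * ∑ k ∈ range (m + 1), g k := by
  have hrefl : ∑ k ∈ range (m + 1), (a * k + b) * g k
      = ∑ k ∈ range (m + 1), (a * (m - k : ℕ) + b) * g k := by
    rw [← sum_range_reflect]
    refine sum_congr rfl fun k hk => ?_
    have hk : k ≤ m := mem_range_succ_iff.1 hk
    rw [show m + 1 - 1 - k = m - k by omega, hg k hk]
  rw [two_mul]
  nth_rw 2 [hrefl]
  rw [← sum_add_distrib, mul_sum]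
  refine sum_congr rfl fun k hk => ?_
  rw [Nat.cast_sub (mem_range_succ_iff.1 hk)]
  ring

theorem sum_baseTerm_eq_zero (h : (8 * m + 1 : F) = 0) (hfac : ((2 * m) ! : F) ≠ 0) :
    ∑ k ∈ range (2 * m + 1), baseTerm F k = 0 := by
  set g : ℕ → F := fun k => (m ! : F) ^ 6 * ((2 * m) ! : F) ^ 5 /
      (k ! * (m - k) ! * (((2 * m - k) ! : F) * (m + k) !) ^ 5) with hg
  have hsymm : ∀ k ≤ m, g (m - k) = g k := by
    intro k hk
    simp only [hg]
    rw [Nat.sub_sub_self hk, show 2 * m - (m - k) = m + k by omega,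
      show m + (m - k) = 2 * m - k by omega]
    ring
  have h2 : (2 : F) ≠ 0 := fun h2 => by
    simp [show (8 : F) = 2 * 4 by norm_num, h2] at h
  have hsub : ∑ k ∈ range (2 * m + 1), baseTerm F k = ∑ k ∈ range (m + 1), baseTerm F k :=
    (sum_subset (range_subset_range.2 (by omega))
      fun k _ hk => baseTerm_eq_zero h (by simpa using hk)).symm
  rw [hsub, sum_congr rfl fun k hk => baseTerm_eq h hfac (mem_range_succ_iff.1 hk)]
  refine (_root_.mul_eq_zero.1 ?_).resolve_left h2
  rw [two_mul_sum_range_mul_of_symm hsymm]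
  linear_combination 2 * (∑ k ∈ range (m + 1), g k) * h

end Field

section Residue

variable {p : ℕ} [Fact p.Prime]

def ReducesTo (q : ℚ_[p]) (r : ZMod p) : Prop :=
  ∃ t : ℤ_[p], (t : ℚ_[p]) = q ∧ PadicInt.toZMod t = r

theorem reducesTo_zero_iff {q : ℚ_[p]} : ReducesTo q 0 ↔ ∃ c : ℤ_[p], q = p * c := by
  constructor
  · rintro ⟨t, rfl, ht⟩
    have : t ∈ Ideal.span {(p : ℤ_[p])} := by
      rw [← PadicInt.maximalIdeal_eq_span_p, ← PadicInt.ker_toZMod]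
      exact ht
    obtain ⟨c, rfl⟩ := Ideal.mem_span_singleton.1 this
    exact ⟨c, by push_cast; rfl⟩
  · rintro ⟨c, rfl⟩
    exact ⟨p * c, by push_cast; rfl, by simp⟩

namespace ReducesTo

variable {a b : ℚ_[p]} {r s : ZMod p}

theorem natCast (n : ℕ) : ReducesTo (n : ℚ_[p]) n := ⟨n, rfl, map_natCast _ n⟩

theorem ofNat (n : ℕ) [n.AtLeastTwo] : ReducesTo (OfNat.ofNat n : ℚ_[p]) (OfNat.ofNat n) := by
  simpa only [Nat.cast_ofNat] using natCast (p := p) (OfNat.ofNat n)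

theorem one : ReducesTo (1 : ℚ_[p]) 1 := by simpa using natCast (p := p) 1

theorem add (ha : ReducesTo a r) (hb : ReducesTo b s) : ReducesTo (a + b) (r + s) := by
  obtain ⟨a, rfl, rfl⟩ := ha
  obtain ⟨b, rfl, rfl⟩ := hb
  exact ⟨a + b, rfl, map_add _ a b⟩

theorem sub (ha : ReducesTo a r) (hb : ReducesTo b s) : ReducesTo (a - b) (r - s) := by
  obtain ⟨a, rfl, rfl⟩ := ha
  obtain ⟨b, rfl, rfl⟩ := hb
  exact ⟨a - b, rfl, map_sub _ a b⟩

theorem mul (ha : ReducesTo a r) (hb : ReducesTo b s) : ReducesTo (a * b) (r * s) := by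
  obtain ⟨a, rfl, rfl⟩ := ha
  obtain ⟨b, rfl, rfl⟩ := hb
  exact ⟨a * b, rfl, map_mul _ a b⟩

theorem div (ha : ReducesTo a r) (hb : ReducesTo b s) (hs : s ≠ 0) :
    ReducesTo (a / b) (r / s) := by
  obtain ⟨a, rfl, rfl⟩ := ha
  obtain ⟨b, rfl, rfl⟩ := hb
  have hb : ‖(b : ℚ_[p])‖ = 1 := by
    rw [← PadicInt.norm_def, ← PadicInt.isUnit_iff, ← IsLocalRing.notMem_maximalIdeal,
      ← PadicInt.ker_toZMod]
    exact hs
  have hb0 : (b : ℚ_[p]) ≠ 0 := norm_ne_zero_iff.1 (by rw [hb]; exact one_ne_zero)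
  let t : ℤ_[p] := ⟨a / b, by rw [norm_div, hb, div_one]; exact a.2⟩
  have ht : t * b = a := Subtype.ext (div_mul_cancel₀ _ hb0)
  exact ⟨t, rfl, eq_div_of_mul_eq hs (by rw [← map_mul, ht])⟩

theorem sum {ι : Type*} {s : Finset ι} {f : ι → ℚ_[p]} {g : ι → ZMod p}
    (h : ∀ i ∈ s, ReducesTo (f i) (g i)) : ReducesTo (∑ i ∈ s, f i) (∑ i ∈ s, g i) := by
  classical
  induction s using Finset.induction_on with
  | empty => simpa using natCast 0
  | insert i s hi ih =>
    rw [sum_insert hi, sum_insert hi]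
    exact (h i (mem_insert_self i s)).add (ih fun j hj => h j (mem_insert_of_mem hj))

theorem rf (ha : ReducesTo a r) (k : ℕ) :
    ReducesTo (rf a k) ((ascPochhammer (ZMod p) k).eval r) := by
  induction k with
  | zero => simpa [_root_.rf] using natCast 1
  | succ k ih =>
    rw [_root_.rf, prod_range_succ, ascPochhammer_succ_eval]
    exact ih.mul (ha.add (natCast k))

end ReducesTo
end Residue

theorem ZMod.natCast_factorial_ne_zero {p n : ℕ} [Fact p.Prime] (hn : n < p) :
    (n ! : ZMod p) ≠ 0 := by
  rw [Ne, ZMod.natCast_eq_zero_iff, (Fact.out : p.Prime).dvd_factorial, not_le]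
  exact hn

theorem reducesTo_baseTerm {p : ℕ} [Fact p.Prime] {x y z w : ℚ_[p]} (hx : ReducesTo x 0)
    (hy : ReducesTo y 0) (hz : ReducesTo z 0) (hw : ReducesTo w 0) (h8 : (8 : ZMod p) ≠ 0)
    {k : ℕ} (hk : (ascPochhammer (ZMod p) k).eval (7 / 8) ^ 5 * (k ! : ZMod p) ≠ 0) :
    ReducesTo ((16 * (k : ℚ_[p]) + 1) *
        (rf (1 / 8) k * rf (1 / 4 - x) k * rf (1 / 4 - y) k * rf (1 / 4 - z) k *
          rf (1 / 4 - w) k * rf ((1 - p) / 4) k) /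
        (rf (7 / 8 + x) k * rf (7 / 8 + y) k * rf (7 / 8 + z) k * rf (7 / 8 + w) k *
          rf (7 / 8 + p / 4) k * (k ! : ℚ_[p])))
      (baseTerm (ZMod p) k) := by
  have h4 : (4 : ZMod p) ≠ 0 := right_ne_zero_of_mul (a := 2) (by norm_num; exact h8)
  have hp : ReducesTo (p : ℚ_[p]) 0 := by simpa using ReducesTo.natCast (p := p) p
  have h14 : ReducesTo (1 / 4 : ℚ_[p]) (1 / 4) := ReducesTo.one.div (.ofNat 4) h4
  have h18 : ReducesTo (1 / 8 : ℚ_[p]) (1 / 8) := ReducesTo.one.div (.ofNat 8) h8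
  have h78 : ReducesTo (7 / 8 : ℚ_[p]) (7 / 8) := (ReducesTo.ofNat 7).div (.ofNat 8) h8
  have h14_sub {e : ℚ_[p]} (he : ReducesTo e 0) : ReducesTo (1 / 4 - e) (1 / 4) := by
    simpa only [sub_zero] using h14.sub he
  have h78_add {e : ℚ_[p]} (he : ReducesTo e 0) : ReducesTo (7 / 8 + e) (7 / 8) := by
    simpa only [add_zero] using h78.add he
  have h1p : ReducesTo ((1 - p) / 4 : ℚ_[p]) (1 / 4) := by
    simpa only [sub_zero] using (ReducesTo.one.sub hp).div (.ofNat 4) h4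
  have hp4 : ReducesTo ((p : ℚ_[p]) / 4) 0 := by
    simpa only [zero_div] using hp.div (.ofNat 4) h4
  have hnum := (((((h18.rf k).mul ((h14_sub hx).rf k)).mul ((h14_sub hy).rf k)).mul
    ((h14_sub hz).rf k)).mul ((h14_sub hw).rf k)).mul (h1p.rf k)
  have hden := (((((h78_add hx).rf k).mul ((h78_add hy).rf k)).mul ((h78_add hz).rf k)).mul
    ((h78_add hw).rf k)).mul ((h78_add hp4).rf k) |>.mul (.natCast k !)
  have hterm := (((ReducesTo.ofNat 16).mul (.natCast k)).add .one).mul hnum |>.div hden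
    (by convert hk using 1; ring)
  convert hterm using 1
  rw [baseTerm]
  ring

/-- Let `p ≡ 1 (mod 8)` be a prime. Then for all `x, y, z, w ∈ pℤ_p`,
`∑_{k=0}^{(p-1)/4} (16k+1) (1/8)_k (1/4-x)_k (1/4-y)_k (1/4-z)_k (1/4-w)_k ((1-p)/4)_k /
  ((7/8+x)_k (7/8+y)_k (7/8+z)_k (7/8+w)_k (7/8+p/4)_k k!) ∈ pℤ_p`. -/
theorem stmt15 (p : ℕ) [Fact p.Prime] (hp : p % 8 = 1) :
    ∀ x y z w : ℚ_[p],
      (∃ s : ℤ_[p], x = (p : ℚ_[p]) * s) → (∃ s : ℤ_[p], y = (p : ℚ_[p]) * s) →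
      (∃ s : ℤ_[p], z = (p : ℚ_[p]) * s) → (∃ s : ℤ_[p], w = (p : ℚ_[p]) * s) →
      ∃ c : ℤ_[p],
        (∑ k ∈ Finset.range ((p - 1) / 4 + 1),
          (16 * (k : ℚ_[p]) + 1) *
            (rf ((1 : ℚ_[p]) / 8) k *
              rf ((1 : ℚ_[p]) / 4 - x) k * rf ((1 : ℚ_[p]) / 4 - y) k *
              rf ((1 : ℚ_[p]) / 4 - z) k * rf ((1 : ℚ_[p]) / 4 - w) k *
              rf ((1 - (p : ℚ_[p])) / 4) k) /
            (rf ((7 : ℚ_[p]) / 8 + x) k * rf ((7 : ℚ_[p]) / 8 + y) k *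
              rf ((7 : ℚ_[p]) / 8 + z) k * rf ((7 : ℚ_[p]) / 8 + w) k *
              rf ((7 : ℚ_[p]) / 8 + (p : ℚ_[p]) / 4) k * (k.factorial : ℚ_[p])))
        = (p : ℚ_[p]) * (c : ℚ_[p]) := by
  intro x y z w hx hy hz hw
  obtain ⟨m, hm⟩ : ∃ m, p = 8 * m + 1 := ⟨p / 8, by omega⟩
  have h : (8 * m + 1 : ZMod p) = 0 := by
    simpa only [hm, Nat.cast_add, Nat.cast_mul, Nat.cast_ofNat, Nat.cast_one] using
      ZMod.natCast_self p
  have hfac {n : ℕ} (hn : n ≤ 3 * m) : (n ! : ZMod p) ≠ 0 :=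
    ZMod.natCast_factorial_ne_zero (by omega)
  rw [show (p - 1) / 4 + 1 = 2 * m + 1 by omega, ← reducesTo_zero_iff,
    ← sum_baseTerm_eq_zero h (hfac (by omega))]
  refine ReducesTo.sum fun k hk => ?_
  have hk : k ≤ 2 * m := mem_range_succ_iff.1 hk
  exact reducesTo_baseTerm (reducesTo_zero_iff.2 hx) (reducesTo_zero_iff.2 hy)
    (reducesTo_zero_iff.2 hz) (reducesTo_zero_iff.2 hw)
    (eight_ne_zero_of_eight_mul_add_one_eq_zero h)
    (mul_ne_zero (pow_ne_zero 5 (ascPochhammer_eval_seven_div_eight_ne_zero h (hfac (by omega))))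
      (hfac (by omega)))
end
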